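/- Let n₁, n₂, r be natural numbers and set n = n₁ + n₂. If both 2·n₁ + 4·r > 2 + n·(n−1) and n + n₁ + r > 2^r hold, then the triple (n₁, n₂, r) belongs to the explicit list {(1,0,1), (1,1,1), (1,1,2), (1,2,2), (2,0,1), (2,0,2), (2,1,2), (2,2,3), (3,0,1), (3,0,2), (3,0,3), (3,1,3), (4,0,2), (4,0,3)}. -/
import Mathlib

private lemma eight_mul_le_two_pow : ∀ r : ℕ, 6 ≤ r → 8 * r ≤ 2 ^ r := by
  intro r hr
  induction r with
  | zero => omega
  | succ k ih =>
    rcases Nat.lt_or_ge k 6 with h | h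
    · interval_cases k <;> simp_all <;> omega
    · have := ih (by omega)
      have : 2 ^ (k + 1) = 2 * 2 ^ k := by ring
      omega

/-- Finite case analysis from the proof of the Hilali conjecture for 2-stage
spaces: if both numerical conditions fail, the triple `(n₁, n₂, r)` belongs to
an explicit finite list. -/
theorem two_stage_exceptional_triples (n₁ n₂ r : ℕ) (n : ℕ) (hn : n = n₁ + n₂)
    (h1 : 2 * n₁ + 4 * r > 2 + n * (n - 1))
    (h2 : n + n₁ + r > 2 ^ r) :
    (n₁, n₂, r) ∈ [(1, 0, 1), (1, 1, 1), (1, 1, 2), (1, 2, 2), (2, 0, 1),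
      (2, 0, 2), (2, 1, 2), (2, 2, 3), (3, 0, 1), (3, 0, 2), (3, 0, 3),
      (3, 1, 3), (4, 0, 2), (4, 0, 3)] := by
  have hb : n * (n - 1) < 2 + 2 * n + 4 * r := by omega
  have hc : 2 ^ r < 2 * n + r := by omega
  have hr5 : r ≤ 5 := by
    by_contra hr6
    have h8 : 8 * r ≤ 2 ^ r := eight_mul_le_two_pow r (by omega)
    have hn22 : 22 ≤ n := by omega
    have h21 : 21 * n ≤ n * (n - 1) := by
      calc 21 * n = n * 21 := by ring
        _ ≤ n * (n - 1) := Nat.mul_le_mul_left n (by omega)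
    omega
  have hn6 : n ≤ 6 := by
    by_contra hn7
    have h6 : 6 * n ≤ n * (n - 1) := by
      calc 6 * n = n * 6 := by ring
        _ ≤ n * (n - 1) := Nat.mul_le_mul_left n (by omega)
    omega
  subst hn
  have h1' : n₁ ≤ 6 := by omega
  have h2' : n₂ ≤ 6 := by omega
  interval_cases n₁ <;> interval_cases n₂ <;> interval_cases r <;>
    simp_all <;> omega
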